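/- Let (P, ♭, L, O) be an outer-presheaf structure. (i) For every hyper-element h of O, the family k defined by k_V := h_{♭V} is a hyper-element of ♭*O, and it is the unique hyper-element of ♭*O of which h is a translation. (ii) For every hyper-element k of ♭*O, a hyper-element h of O is a translation of k if and only if h^∧_V ≤ h_V ≤ k_V for all V ∈ P, where h^∧_V := ⨆ { δ(k_W)_V | W ∈ P, V ≤ ♭W }. Consequently the set of hyper-elements of O is the disjoint union, over all hyper-elements k of ♭*O, of the intervals of translations of k. -/

import Mathlib

/-! Since `x ≤ δ(x)_V`, the hyper-element condition makes every hyper-element `h`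
antitone, so `h_V ≤ h_{♭V}`; and a translation `h` of `k` satisfies `δ(k_W)_V = δ(h_{♭W})_V ≤ h_V`
whenever `V ≤ ♭W`. Conversely the two bounds at `♭V` pinch `h_{♭V}` to `k_V`: the upper one
gives `h_{♭V} ≤ k_{♭V} = k_V`, and `W = V` in the lower one gives `k_V ≤ δ(k_V)_{♭V} ≤ h_{♭V}`. -/

universe u v

/-- The daseinization of `x ∈ L` at `V ∈ P`: the infimum of the elements of `O V` above `x`. -/
def dasein {P : Type u} {L : Type v} [CompleteLattice L]
    (O : P → Set L) (x : L) (V : P) : L :=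
  sInf {y | y ∈ O V ∧ x ≤ y}

section

variable {P : Type u} {L : Type v} [CompleteLattice L] (O : P → Set L)

theorem le_dasein (x : L) (V : P) : x ≤ dasein O x V :=
  le_sInf fun _ hy => hy.2

variable [Preorder P]

theorem antitone_of_dasein_le {h : P → L}
    (hh : ∀ ⦃V' V : P⦄, V' ≤ V → dasein O (h V) V' ≤ h V') : Antitone h :=
  fun V' _ hle => (le_dasein O _ V').trans (hh hle)

/-- The lower end `h^∧_V` of the interval of translations of `k`. -/
def translationLowerBound (b : P → P) (k : P → L) (V : P) : L :=
  sSup {z : L | ∃ W : P, V ≤ b W ∧ z = dasein O (k W) V}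

variable {O} {b : P → P} {k h : P → L}

theorem translationLowerBound_le (hh : ∀ ⦃V' V : P⦄, V' ≤ V → dasein O (h V) V' ≤ h V')
    (htr : ∀ V, h (b V) = k V) (V : P) : translationLowerBound O b k V ≤ h V :=
  sSup_le <| by
    rintro _ ⟨W, hVW, rfl⟩
    exact htr W ▸ hh hVW

theorem le_translationLowerBound_flat (V : P) : k V ≤ translationLowerBound O b k (b V) :=
  (le_dasein O (k V) (b V)).trans (le_sSup ⟨V, le_rfl, rfl⟩)

theorem isTranslation_iff_mem_interval (hdefl : ∀ V : P, b V ≤ V)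
    (hkidem : ∀ V : P, k (b V) = k V)
    (hh : ∀ ⦃V' V : P⦄, V' ≤ V → dasein O (h V) V' ≤ h V') :
    (∀ V, h (b V) = k V) ↔ ∀ V, translationLowerBound O b k V ≤ h V ∧ h V ≤ k V := by
  constructor
  · intro htr V
    exact ⟨translationLowerBound_le hh htr V,
      htr V ▸ antitone_of_dasein_le O hh (hdefl V)⟩
  · intro hbd V
    apply le_antisymm
    · exact hkidem V ▸ (hbd (b V)).2
    · exact le_translationLowerBound_flat V |>.trans (hbd (b V)).1

end

theorem coarse_graining_of_propositions_general
    {P : Type u} [Preorder P] (b : P → P)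
    (hmono : ∀ ⦃V' V : P⦄, V' ≤ V → b V' ≤ b V)
    (hdefl : ∀ V : P, b V ≤ V)
    (hidem : ∀ V : P, b (b V) = b V)
    {L : Type v} [CompleteLattice L] (O : P → Set L) :
    (∀ h : P → L, (∀ V : P, h V ∈ O V) →
      (∀ ⦃V' V : P⦄, V' ≤ V → dasein O (h V) V' ≤ h V') →
      (((∀ V : P, h (b V) ∈ O (b V)) ∧ (∀ V : P, h (b (b V)) = h (b V)) ∧
        (∀ ⦃V' V : P⦄, V' ≤ V → dasein O (h (b V)) (b V') ≤ h (b V'))) ∧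
       (∀ k : P → L, (∀ V : P, k V ∈ O (b V)) → (∀ V : P, k (b V) = k V) →
        (∀ ⦃V' V : P⦄, V' ≤ V → dasein O (k V) (b V') ≤ k V') →
        (∀ V : P, h (b V) = k V) → k = fun V => h (b V)))) ∧
    (∀ k : P → L, (∀ V : P, k V ∈ O (b V)) → (∀ V : P, k (b V) = k V) →
      (∀ ⦃V' V : P⦄, V' ≤ V → dasein O (k V) (b V') ≤ k V') →
      ∀ h : P → L, (∀ V : P, h V ∈ O V) →
        (∀ ⦃V' V : P⦄, V' ≤ V → dasein O (h V) V' ≤ h V') →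
        ((∀ V : P, h (b V) = k V) ↔
          ∀ V : P, sSup {z : L | ∃ W : P, V ≤ b W ∧ z = dasein O (k W) V} ≤ h V ∧
            h V ≤ k V)) := by
  refine ⟨fun h hmem hh => ⟨?_, ?_⟩, fun k _ hkidem _ h _ hh => ?_⟩
  · exact ⟨fun V => hmem (b V), fun V => by rw [hidem], fun _ _ hle => hh (hmono hle)⟩
  · exact fun k _ _ _ htr => funext fun V => (htr V).symm
  · exact isTranslation_iff_mem_interval hdefl hkidem hh

/-- coarse-graining of propositions: (i) every hyper-element `h` of `O` gives
a hyper-element `k := (h_{♭V})_V` of `♭*O`, the unique one of which `h` is a translation;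
(ii) a hyper-element `h` of `O` is a translation of a hyper-element `k` of `♭*O` iff
`h^∧_V ≤ h_V ≤ k_V` for all `V`. Hence the hyper-elements of `O` partition into the
intervals of translations of hyper-elements of `♭*O`. -/
theorem coarse_graining_of_propositions
    {P : Type u} [Preorder P] (b : P → P)
    (hmono : ∀ ⦃V' V : P⦄, V' ≤ V → b V' ≤ b V)
    (hdefl : ∀ V : P, b V ≤ V)
    (hidem : ∀ V : P, b (b V) = b V)
    {L : Type v} [CompleteLattice L] (O : P → Set L)
    (hOmono : ∀ ⦃V' V : P⦄, V' ≤ V → O V' ⊆ O V)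
    (hInf : ∀ (V : P) (T : Set L), T ⊆ O V → sInf T ∈ O V)
    (hSup : ∀ (V : P) (T : Set L), T ⊆ O V → sSup T ∈ O V) :
    (∀ h : P → L, (∀ V : P, h V ∈ O V) →
      (∀ ⦃V' V : P⦄, V' ≤ V → dasein O (h V) V' ≤ h V') →
      (((∀ V : P, h (b V) ∈ O (b V)) ∧ (∀ V : P, h (b (b V)) = h (b V)) ∧
        (∀ ⦃V' V : P⦄, V' ≤ V → dasein O (h (b V)) (b V') ≤ h (b V'))) ∧
       (∀ k : P → L, (∀ V : P, k V ∈ O (b V)) → (∀ V : P, k (b V) = k V) →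
        (∀ ⦃V' V : P⦄, V' ≤ V → dasein O (k V) (b V') ≤ k V') →
        (∀ V : P, h (b V) = k V) → k = fun V => h (b V)))) ∧
    (∀ k : P → L, (∀ V : P, k V ∈ O (b V)) → (∀ V : P, k (b V) = k V) →
      (∀ ⦃V' V : P⦄, V' ≤ V → dasein O (k V) (b V') ≤ k V') →
      ∀ h : P → L, (∀ V : P, h V ∈ O V) →
        (∀ ⦃V' V : P⦄, V' ≤ V → dasein O (h V) V' ≤ h V') →
        ((∀ V : P, h (b V) = k V) ↔
          ∀ V : P, sSup {z : L | ∃ W : P, V ≤ b W ∧ z = dasein O (k W) V} ≤ h V ∧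
            h V ≤ k V)) :=
  coarse_graining_of_propositions_general b hmono hdefl hidem O
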